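/- Let L be the Laplacian and L_y the signed Laplacian of an m-uniform hypergraph (m even), with sign vector y ∈ {-1,+1}ⁿ. For any δ ∈ ℝ and nonzero v ∈ ℝⁿ with v ⊥ y (∑ᵢ vᵢ yᵢ = 0), the Rayleigh quotients satisfy R_{L_y}(v) ≥ R_L(v ∘ y + δ𝟙), provided v ∘ y + δ𝟙 ≠ 0. -/
import Mathlib


open Finset

/-- The ζ-function of the paper. -/
noncomputable def zeta (m : ℕ) (v : Fin m → ℝ) : ℝ :=
  ∑ I ∈ Finset.univ.filter (fun I : Finset (Fin m) => I.card = m / 2),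
    (∑ i ∈ I, v i - ∑ j ∈ Iᶜ, v j) ^ m

/-- The quadratic (degree-m) form of the hypergraph Laplacian:
⟨L, v^{⊗m}⟩ = (1/(m!·binom(m,m/2))) ∑_{e ∈ E} ζ(v_{e₁},…,v_{e_m}). -/
noncomputable def lapForm (n m : ℕ) (E : Finset (Fin m → Fin n)) (v : Fin n → ℝ) : ℝ :=
  (1 / (m.factorial * m.choose (m / 2)) : ℝ) * ∑ e ∈ E, zeta m (fun k => v (e k))

/-- Quadratic form of the signed hypergraph Laplacian $L_y$. -/
noncomputable def signedLapForm (n m : ℕ) (E : Finset (Fin m → Fin n))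
    (y v : Fin n → ℝ) : ℝ :=
  (1 / (m.factorial * m.choose (m / 2)) : ℝ) *
    ∑ e ∈ E, zeta m (fun k => y (e k) * v (e k))

lemma zeta_shift (m : ℕ) (hm : Even m) (u : Fin m → ℝ) (δ : ℝ) :
    zeta m (fun k => u k + δ) = zeta m u := by
  unfold zeta
  refine Finset.sum_congr rfl fun I hI => ?_
  simp only [Finset.mem_filter] at hI
  have hcard : Iᶜ.card = m / 2 := by
    have h := Finset.card_compl I
    simp only [Fintype.card_fin] at h
    obtain ⟨k, hk⟩ := hm
    rw [h, hI.2]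
    omega
  rw [Finset.sum_add_distrib, Finset.sum_add_distrib, Finset.sum_const, Finset.sum_const,
    hI.2, hcard]
  ring_nf

lemma zeta_nonneg (m : ℕ) (hm : Even m) (u : Fin m → ℝ) : 0 ≤ zeta m u :=
  Finset.sum_nonneg fun I _ => hm.pow_nonneg _

theorem signed_rayleigh_lower_bound (n m : ℕ) (hm : Even m) (hmpos : 0 < m)
    (E : Finset (Fin m → Fin n)) (y : Fin n → ℝ)
    (hy : ∀ i, y i = 1 ∨ y i = -1)
    (v : Fin n → ℝ) (hv : v ≠ 0) (horth : ∑ i, v i * y i = 0) (δ : ℝ)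
    (hw : (fun i => v i * y i + δ) ≠ 0) :
    lapForm n m E (fun i => v i * y i + δ)
        / Real.sqrt (∑ i, (v i * y i + δ) ^ 2) ^ m
      ≤ signedLapForm n m E y v / Real.sqrt (∑ i, v i ^ 2) ^ m := by
  -- numerators are equal
  have hnum : lapForm n m E (fun i => v i * y i + δ) = signedLapForm n m E y v := by
    unfold lapForm signedLapForm
    congr 1
    refine Finset.sum_congr rfl fun e _ => ?_
    have := zeta_shift m hm (fun k => y (e k) * v (e k)) δ
    rw [← this]
    congr 1
    funext k
    ring
  rw [hnum]
  -- numerator nonneg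
  have hN : 0 ≤ signedLapForm n m E y v := by
    unfold signedLapForm
    apply mul_nonneg
    · positivity
    · exact Finset.sum_nonneg fun e _ => zeta_nonneg m hm _
  -- denominators
  have hsum : 0 < ∑ i, v i ^ 2 := by
    obtain ⟨i, hi⟩ := Function.ne_iff.mp hv
    have hi' : v i ≠ 0 := by simpa using hi
    exact Finset.sum_pos' (fun j _ => sq_nonneg _) ⟨i, Finset.mem_univ i, by positivity⟩
  have hsum2 : ∑ i, (v i * y i + δ) ^ 2 = (∑ i, v i ^ 2) + n * δ ^ 2 := by
    have hy2 : ∀ i, y i ^ 2 = 1 := fun i => by rcases hy i with h | h <;> rw [h] <;> ring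
    have : ∀ i, (v i * y i + δ) ^ 2 = v i ^ 2 * y i ^ 2 + 2 * δ * (v i * y i) + δ ^ 2 :=
      fun i => by ring
    simp_rw [this, hy2, mul_one]
    rw [Finset.sum_add_distrib, Finset.sum_add_distrib, ← Finset.mul_sum, horth,
      Finset.sum_const]
    simp [mul_comm]
  have hle : Real.sqrt (∑ i, v i ^ 2) ^ m ≤ Real.sqrt (∑ i, (v i * y i + δ) ^ 2) ^ m := by
    apply pow_le_pow_left₀ (Real.sqrt_nonneg _)
    apply Real.sqrt_le_sqrt
    rw [hsum2]
    nlinarith [sq_nonneg δ, Nat.cast_nonneg (α := ℝ) n]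
  have hpos : 0 < Real.sqrt (∑ i, v i ^ 2) ^ m := by
    apply pow_pos
    exact Real.sqrt_pos.mpr hsum
  gcongr
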